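/- An infinite word w over {P,S} is infinitarily strongly normalizing (SN∞) if and only if for each integer k the set {n ∈ ℕ : sum(w,n) = k} is finite, i.e. each value of sum(w,·) occurs only finitely often. -/

import Mathlib

/-!
Infinitary rewriting for the weakly orthogonal string rewrite system
over the alphabet `{P, S}` with rules `PS → ε` and `SP → ε`.
-/

namespace PS

/-- The two letters of the alphabet. -/
inductive Letter : Type
  | P : Letter
  | S : Letter
  deriving DecidableEq

open Letter

/-- Finite words over `{P, S}`. -/
abbrev Word : Type := List Letter

/-- Infinite words over `{P, S}`. -/
abbrev IWord : Type := ℕ → Letter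

/-- One rewrite step on finite words: delete an adjacent factor `PS` or `SP`. -/
def FStep (w w' : Word) : Prop :=
  ∃ u v : Word, (w = u ++ [P, S] ++ v ∨ w = u ++ [S, P] ++ v) ∧ w' = u ++ v

/-- The value of a letter: `S` counts `+1` and `P` counts `-1`. -/
def lval : Letter → ℤ
  | S => 1
  | P => -1

/-- `sum(w)` for a finite word `w`: number of `S`'s minus number of `P`'s. -/
def fsum (w : Word) : ℤ := (w.map lval).sum

/-- `sum(w, n)`: the number of `S`'s minus the number of `P`'s among the
first `n` letters of the infinite word `w`. -/
def isum (w : IWord) (n : ℕ) : ℤ := ∑ i ∈ Finset.range n, lval (w i)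

/-- A rewrite step at depth `d` on infinite words: the letters at
positions `d`, `d+1` form `PS` or `SP` and are deleted. -/
def IStepAt (d : ℕ) (w w' : IWord) : Prop :=
  ((w d = P ∧ w (d + 1) = S) ∨ (w d = S ∧ w (d + 1) = P)) ∧
    ∀ i, w' i = if i < d then w i else w (i + 2)

/-- `IRed w u` (written `w ↠∞ u`): there is a strongly convergent infinitary
reduction from `w` with limit `u`.  By compression, reductions of length at
most `ω` suffice; such a reduction is a sequence of rewrite steps (with idle
steps allowed, to accommodate finite reductions) whose depths tend to
infinity and whose terms converge to `u`. -/
def IRed (w u : IWord) : Prop :=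
  ∃ (t : ℕ → IWord) (d : ℕ → Option ℕ),
    t 0 = w ∧
    (∀ n, (d n).elim (t (n + 1) = t n) (fun k => IStepAt k (t n) (t (n + 1)))) ∧
    (∀ m : ℕ, ∃ N, ∀ n ≥ N, ∀ k, d n = some k → m ≤ k) ∧
    (∀ m : ℕ, ∃ N, ∀ n ≥ N, ∀ i ≤ m, t n i = u i)

/-- The constant infinite word `S^ω`. -/
def Somega : IWord := fun _ => S

/-- The constant infinite word `P^ω`. -/
def Pomega : IWord := fun _ => P

/-- The `S`-norm `‖w‖_S = sup_n sum(w, n)` (as an extended real). -/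
noncomputable def Snorm (w : IWord) : EReal := ⨆ n : ℕ, ((isum w n : ℝ) : EReal)

/-- The `P`-norm `‖w‖_P = sup_n (− sum(w, n))` (as an extended real). -/
noncomputable def Pnorm (w : IWord) : EReal := ⨆ n : ℕ, ((-(isum w n) : ℝ) : EReal)

/-- An infinite word is a normal form if it admits no rewrite step. -/
def NormalForm (w : IWord) : Prop := ∀ (d : ℕ) (w' : IWord), ¬ IStepAt d w w'

/-- Infinitary conversion: the equivalence generated by `↠∞`. -/
inductive Conv : IWord → IWord → Prop
  | rel {w u : IWord} : IRed w u → Conv w u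
  | refl (w : IWord) : Conv w w
  | symm {w u : IWord} : Conv w u → Conv u w
  | trans {w u v : IWord} : Conv w u → Conv u v → Conv w v

end PS

namespace PS

/-- `w` is infinitarily strongly normalizing: every infinite reduction
sequence starting from `w` (by compression, of length `ω`) is strongly
convergent, i.e. the depths of its steps tend to infinity. -/
def SNinf (w : IWord) : Prop :=
  ∀ (t : ℕ → IWord) (d : ℕ → ℕ),
    t 0 = w → (∀ n, IStepAt (d n) (t n) (t (n + 1))) →
    ∀ m : ℕ, ∃ N, ∀ n ≥ N, m ≤ d n

lemma isum_succ (w : IWord) (n : ℕ) : isum w (n+1) = isum w n + lval (w n) :=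
  Finset.sum_range_succ _ n

lemma lval_ne_zero (l : Letter) : lval l ≠ 0 := by cases l <;> simp [lval]

lemma lval_add_ne {x y : Letter} (h : x ≠ y) : lval x + lval y = 0 := by
  cases x <;> cases y <;> simp_all [lval]

/-- index transformation of a step at depth `d`. -/
def skip (d i : ℕ) : ℕ := if i ≤ d then i else i + 2

lemma skip_strictMono (d : ℕ) : StrictMono (skip d) := by
  intro i j hij
  unfold skip
  split <;> split <;> omega

lemma le_skip (d i : ℕ) : i ≤ skip d i := by unfold skip; split <;> omega

lemma step_ne {d : ℕ} {u u' : IWord} (h : IStepAt d u u') : u d ≠ u (d+1) := by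
  rcases h.1 with ⟨h1, h2⟩ | ⟨h1, h2⟩ <;> rw [h1, h2] <;> simp

lemma isum_step {d : ℕ} {u u' : IWord} (h : IStepAt d u u') (i : ℕ) :
    isum u' i = isum u (skip d i) := by
  induction i with
  | zero => simp [skip, isum]
  | succ i ih =>
    have hui : u' i = if i < d then u i else u (i + 2) := h.2 i
    rcases lt_trichotomy i d with hc | hc | hc
    · have h1 : skip d i = i := by simp [skip, Nat.le_of_lt hc]
      have h2 : skip d (i+1) = i+1 := by unfold skip; split <;> omega
      rw [isum_succ, ih, h1, h2, isum_succ]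
      simp [hui, hc]
    · subst hc
      have h1 : skip i i = i := by simp [skip]
      have h2 : skip i (i+1) = i+3 := by unfold skip; split <;> omega
      have hcan : lval (u i) + lval (u (i+1)) = 0 := lval_add_ne (step_ne h)
      rw [isum_succ, ih, h1, h2]
      have h3 : isum u (i+3) = isum u i + lval (u i) + lval (u (i+1)) + lval (u (i+2)) := by
        rw [show i+3 = (i+2)+1 from rfl, isum_succ, show i+2 = (i+1)+1 from rfl,
          isum_succ, isum_succ]
      rw [h3, hui]
      simp only [lt_irrefl, if_false]
      omega
    · have h1 : skip d i = i+2 := by unfold skip; split <;> omega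
      have h2 : skip d (i+1) = i+3 := by unfold skip; split <;> omega
      rw [isum_succ, ih, h1, h2, hui, if_neg (by omega : ¬ i < d)]
      exact (isum_succ u (i+2)).symm

lemma abs_isum_le (w : IWord) (n : ℕ) : |isum w n| ≤ n := by
  induction n with
  | zero => simp [isum]
  | succ n ih =>
    rw [isum_succ]
    have : |lval (w n)| ≤ 1 := by cases (w n) <;> simp [lval]
    calc |isum w n + lval (w n)| ≤ |isum w n| + |lval (w n)| := abs_add_le _ _
      _ ≤ n + 1 := by exact_mod_cast add_le_add ih this

/-- index tracking along a reduction -/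
def phi (d : ℕ → ℕ) : ℕ → ℕ → ℕ
  | 0, j => j
  | n+1, j => phi d n (skip (d n) j)

lemma phi_strictMono (d : ℕ → ℕ) : ∀ n, StrictMono (phi d n) := by
  intro n
  induction n with
  | zero => exact fun i j h => h
  | succ n ih => exact fun i j h => ih (skip_strictMono (d n) h)

lemma phi_mono_n (d : ℕ → ℕ) (j : ℕ) : Monotone (fun n => phi d n j) := by
  apply monotone_nat_of_le_succ
  intro n
  exact (phi_strictMono d n).monotone (le_skip (d n) j)

lemma phi_strict_n (d : ℕ → ℕ) {j n : ℕ} (h : d n < j) : phi d n j < phi d (n+1) j := by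
  have : j < skip (d n) j := by unfold skip; split <;> omega
  exact (phi_strictMono d n) this

lemma SNinf_of_finite (w : IWord) (hfin : ∀ k : ℤ, {n : ℕ | isum w n = k}.Finite) :
    SNinf w := by
  intro t d ht0 hstep m
  by_contra hcon
  push_neg at hcon
  have hisum : ∀ n j, isum (t n) j = isum w (phi d n j) := by
    intro n
    induction n with
    | zero => intro j; simp [phi, ht0]
    | succ n ih => intro j; rw [isum_step (hstep n) j, ih]; rfl
  have hunb : ∀ c : ℕ, ∃ n, c ≤ phi d n m := by
    intro c; induction c with
    | zero => exact ⟨0, Nat.zero_le _⟩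
    | succ c ih =>
      obtain ⟨n, hn⟩ := ih
      obtain ⟨n', hn', hd⟩ := hcon n
      have h1 : phi d n m ≤ phi d n' m := phi_mono_n d m hn'
      have h2 : phi d n' m < phi d (n'+1) m := phi_strict_n d hd
      exact ⟨n'+1, by omega⟩
  have hB : {x : ℕ | (isum w x).natAbs ≤ m}.Finite := by
    have hsub : {x : ℕ | (isum w x).natAbs ≤ m} ⊆
        ⋃ k ∈ Finset.Icc (-(m:ℤ)) (m:ℤ), {n : ℕ | isum w n = k} := by
      intro x hx
      simp only [Set.mem_setOf_eq] at hx
      simp only [Set.mem_iUnion, Finset.mem_Icc, Set.mem_setOf_eq]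
      exact ⟨isum w x, ⟨by omega, by omega⟩, rfl⟩
    exact Set.Finite.subset
      (Set.Finite.biUnion (Finset.Icc _ _).finite_toSet (fun k _ => hfin k)) hsub
  obtain ⟨C, hC⟩ := hB.bddAbove
  obtain ⟨n, hn⟩ := hunb (C+1)
  have hmem : phi d n m ∈ {x : ℕ | (isum w x).natAbs ≤ m} := by
    have := abs_isum_le (t n) m
    rw [hisum n m, abs_le] at this
    simp only [Set.mem_setOf_eq]
    omega
  have := hC hmem
  omega

lemma isum_chain (u : IWord) (a : ℕ) :
    ∀ t, (∀ i, a ≤ i → i < a + t → u i = u (i+1)) →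
      isum u (a+t) = isum u a + t * lval (u a) := by
  intro t
  induction t with
  | zero => intro _; simp
  | succ t ih =>
    intro hch
    have h1 : isum u (a+t) = isum u a + t * lval (u a) :=
      ih (fun i h1 h2 => hch i h1 (by omega))
    have hconst : ∀ s, a + s ≤ a + t → u (a+s) = u a := by
      intro s
      induction s with
      | zero => intro _; rfl
      | succ s ihs =>
        intro hs
        rw [show a + (s+1) = (a+s) + 1 from rfl, ← hch (a+s) (by omega) (by omega)]
        exact ihs (by omega)
    have h2 : u (a+t) = u a := hconst t le_rfl
    rw [show a + (t+1) = (a+t)+1 from rfl, isum_succ, h1, h2]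
    push_cast
    ring

lemma lval_cases (l : Letter) : lval l = 1 ∨ lval l = -1 := by
  cases l <;> simp [lval]

lemma exists_diff (u : IWord) {a b : ℕ} (hab : a < b) (hsum : isum u a = isum u b) :
    ∃ j, a ≤ j ∧ j + 2 ≤ b ∧ u j ≠ u (j+1) := by
  by_contra hc
  push_neg at hc
  have hch : ∀ i, a ≤ i → i < a + (b - 1 - a) → u i = u (i+1) := by
    intro i h1 h2
    exact hc i h1 (by omega)
  have h1 : isum u (a + (b-1-a)) = isum u a + (b-1-a : ℕ) * lval (u a) :=
    isum_chain u a _ hch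
  have hb1 : a + (b-1-a) = b - 1 := by omega
  have h2 : isum u b = isum u (b-1) + lval (u (b-1)) := by
    rw [show b = (b-1)+1 by omega] ; exact isum_succ u (b-1)
  rw [hb1] at h1
  rcases lval_cases (u a) with hx | hx <;> rcases lval_cases (u (b-1)) with hy | hy
  · rw [hx] at h1; rw [hy] at h2; omega
  · -- u a = S-ish, u (b-1) = P-ish : forces b = a+2, then u a ≠ u (a+1) contradiction
    rw [hx] at h1; rw [hy] at h2
    have hb : b = a + 2 := by omega
    have : u a = u (a+1) := hc a le_rfl (by omega)
    rw [show a + 1 = b - 1 by omega] at this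
    rw [← this, hx] at hy
    omega
  · rw [hx] at h1; rw [hy] at h2
    have hb : b = a + 2 := by omega
    have : u a = u (a+1) := hc a le_rfl (by omega)
    rw [show a + 1 = b - 1 by omega] at this
    rw [← this, hx] at hy
    omega
  · rw [hx] at h1; rw [hy] at h2; omega

open scoped Classical in
/-- State for constructing a divergent reduction: a word together with an
infinite strictly increasing sequence of positions where the partial sum is `k`. -/
structure St (k : ℤ) where
  u : IWord
  a : ℕ → ℕ
  mono : StrictMono a
  hsum : ∀ i, isum u (a i) = k

variable {k : ℤ}

lemma St.depth_exists (s : St k) : ∃ j, s.a 0 ≤ j ∧ s.u j ≠ s.u (j+1) := by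
  obtain ⟨j, h1, h2, h3⟩ := exists_diff s.u (s.mono (show (0:ℕ) < 1 by omega))
    ((s.hsum 0).trans (s.hsum 1).symm)
  exact ⟨j, h1, h3⟩

open scoped Classical in
noncomputable def St.depth (s : St k) : ℕ := Nat.find s.depth_exists

lemma St.dge (s : St k) : s.a 0 ≤ s.depth := (Nat.find_spec s.depth_exists).1
lemma St.dne (s : St k) : s.u s.depth ≠ s.u (s.depth + 1) := (Nat.find_spec s.depth_exists).2
lemma St.dmin (s : St k) : ∀ i, s.a 0 ≤ i → i < s.depth → s.u i = s.u (i+1) := by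
  intro i h1 h2
  have := Nat.find_min s.depth_exists h2
  push_neg at this
  exact this h1

lemma St.dle (s : St k) : s.depth + 2 ≤ s.a 1 := by
  obtain ⟨j, h1, h2, h3⟩ := exists_diff s.u (s.mono (show (0:ℕ) < 1 by omega))
    ((s.hsum 0).trans (s.hsum 1).symm)
  have : s.depth ≤ j := Nat.find_min' s.depth_exists ⟨h1, h3⟩
  omega

/-- the word after one step -/
noncomputable def St.nextu (s : St k) : IWord := fun i => if i < s.depth then s.u i else s.u (i+2)

lemma St.step_nextu (s : St k) : IStepAt s.depth s.u s.nextu := by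
  refine ⟨?_, fun i => rfl⟩
  have h := s.dne
  cases h1 : s.u s.depth <;> cases h2 : s.u (s.depth + 1) <;>
    simp_all

lemma St.isum_nextu (s : St k) (i : ℕ) : isum s.nextu i = isum s.u (skip s.depth i) :=
  isum_step s.step_nextu i

/-- in the boundary case the deleted pair sits right at `a 0`. -/
lemma St.drop_depth (s : St k) (h : s.depth + 2 = s.a 1) : s.depth = s.a 0 := by
  have hch : ∀ i, s.a 0 ≤ i → i < s.a 0 + (s.depth - s.a 0) → s.u i = s.u (i+1) := by
    intro i h1 h2
    exact s.dmin i h1 (by omega)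
  have h1 : isum s.u (s.a 0 + (s.depth - s.a 0)) =
      isum s.u (s.a 0) + ((s.depth - s.a 0 : ℕ) : ℤ) * lval (s.u (s.a 0)) :=
    isum_chain s.u (s.a 0) _ hch
  have hd : s.a 0 + (s.depth - s.a 0) = s.depth := by have := s.dge; omega
  rw [hd, s.hsum 0] at h1
  have h2 : isum s.u (s.depth + 2) = isum s.u s.depth := by
    rw [show s.depth + 2 = (s.depth + 1) + 1 from rfl, isum_succ, isum_succ]
    have := lval_add_ne s.dne
    omega
  rw [h, s.hsum 1] at h2
  have hz : ((s.depth - s.a 0 : ℕ) : ℤ) * lval (s.u (s.a 0)) = 0 := by linarith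
  rcases mul_eq_zero.1 hz with hz | hz
  · have := s.dge; omega
  · exact absurd hz (lval_ne_zero _)

noncomputable def St.next (s : St k) : St k :=
  if h : s.depth + 2 = s.a 1 then
    { u := s.nextu
      a := fun i => if i = 0 then s.a 0 else s.a (i+1) - 2
      mono := by
        have hd := s.drop_depth h
        have hge := s.dge
        intro i j hij
        dsimp only
        by_cases hi : i = 0
        · subst hi
          rw [if_pos rfl, if_neg (by omega : ¬ j = 0)]
          have h5 : s.a 1 < s.a (j+1) := s.mono (by omega)
          omega
        · rw [if_neg hi, if_neg (by omega : ¬ j = 0)]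
          have h3 : s.a (i+1) < s.a (j+1) := s.mono (by omega)
          have h4 : s.a 1 ≤ s.a (i+1) := s.mono.monotone (by omega)
          omega
      hsum := by
        have hge := s.dge
        intro i
        by_cases hi : i = 0
        · subst hi
          rw [if_pos rfl, s.isum_nextu]
          rw [show skip s.depth (s.a 0) = s.a 0 by unfold skip; split <;> omega]
          exact s.hsum 0
        · rw [if_neg hi]
          have h4 : s.a 1 ≤ s.a (i+1) := s.mono.monotone (by omega)
          have h5 : s.a 1 < s.a (i+1) := s.mono (by omega)
          rw [s.isum_nextu]
          rw [show skip s.depth (s.a (i+1) - 2) = s.a (i+1) by unfold skip; split <;> omega]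
          exact s.hsum (i+1) }
  else
    { u := s.nextu
      a := fun i => if i = 0 then s.a 0 else s.a i - 2
      mono := by
        have hd := s.dle
        have hd2 := s.dge
        have hne : s.depth + 2 < s.a 1 := by omega
        intro i j hij
        dsimp only
        by_cases hi : i = 0
        · subst hi
          rw [if_pos rfl, if_neg (by omega : ¬ j = 0)]
          have h5 : s.a 1 ≤ s.a j := s.mono.monotone (by omega)
          omega
        · rw [if_neg hi, if_neg (by omega : ¬ j = 0)]
          have h3 : s.a i < s.a j := s.mono hij
          have h4 : s.a 1 ≤ s.a i := s.mono.monotone (by omega)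
          omega
      hsum := by
        have hd := s.dle
        have hd2 := s.dge
        have hne : s.depth + 2 < s.a 1 := by omega
        intro i
        by_cases hi : i = 0
        · subst hi
          rw [if_pos rfl, s.isum_nextu]
          rw [show skip s.depth (s.a 0) = s.a 0 by unfold skip; split <;> omega]
          exact s.hsum 0
        · rw [if_neg hi]
          have h4 : s.a 1 ≤ s.a i := s.mono.monotone (by omega)
          rw [s.isum_nextu]
          rw [show skip s.depth (s.a i - 2) = s.a i by unfold skip; split <;> omega]
          exact s.hsum i }

lemma St.next_a0 (s : St k) : s.next.a 0 = s.a 0 := by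
  unfold St.next
  split <;> rfl

lemma St.next_step (s : St k) : IStepAt s.depth s.u s.next.u := by
  have h := s.step_nextu
  unfold St.next
  split <;> exact h

lemma St.next_gap (s : St k) (h : s.depth ≠ s.a 0) : s.next.a 1 + 2 = s.a 1 := by
  have hdrop : ¬ (s.depth + 2 = s.a 1) := fun hc => h (s.drop_depth hc)
  have hd := s.dle
  have hd2 := s.dge
  unfold St.next
  rw [dif_neg hdrop]
  simp only [if_neg (Nat.succ_ne_zero 0)]
  omega


/-- An infinite word `w` over `{P, S}` is infinitarily
strongly normalizing (`SN∞`) if and only if each value of `sum(w, ·)` occurs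
only finitely often. -/
theorem SNinf_iff_sum_values_finite (w : IWord) :
    SNinf w ↔ ∀ k : ℤ, {n : ℕ | isum w n = k}.Finite := by
  constructor
  · intro hSN k
    by_contra hinf
    have hpinf : {n : ℕ | isum w n = k}.Infinite := hinf
    let p : ℕ → Prop := fun n => isum w n = k
    have hpinf' : (setOf p).Infinite := hpinf
    let s0 : St k :=
      { u := w, a := Nat.nth p, mono := Nat.nth_strictMono hpinf',
        hsum := fun i => Nat.nth_mem_of_infinite hpinf' i }
    let s : ℕ → St k := fun n => St.next^[n] s0
    have hsucc : ∀ n, s (n+1) = (s n).next := fun n => Function.iterate_succ_apply' _ _ _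
    have ha0 : ∀ n, (s n).a 0 = s0.a 0 := by
      intro n
      induction n with
      | zero => rfl
      | succ n ih => rw [hsucc n, St.next_a0, ih]
    have hstep : ∀ n, IStepAt ((s n).depth) ((s n).u) ((s (n+1)).u) := by
      intro n; rw [hsucc n]; exact (s n).next_step
    obtain ⟨N, hN⟩ := hSN (fun n => (s n).u) (fun n => (s n).depth) rfl hstep (s0.a 0 + 1)
    have hgap : ∀ i, (s (N+i)).a 1 + 2*i = (s N).a 1 := by
      intro i
      induction i with
      | zero => simp
      | succ i ih =>
        have hd := hN (N+i) (by omega)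
        have hne : (s (N+i)).depth ≠ (s (N+i)).a 0 := by
          rw [ha0 (N+i)]; omega
        have hg := (s (N+i)).next_gap hne
        rw [← hsucc (N+i)] at hg
        rw [show N + (i+1) = (N+i)+1 by omega]
        omega
    have h1 := hgap ((s N).a 1)
    have h2 : (s (N + (s N).a 1)).a 0 < (s (N + (s N).a 1)).a 1 :=
      (s (N + (s N).a 1)).mono (by omega)
    omega
  · exact SNinf_of_finite w

end PS
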